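/- arXiv:2308.08663 — 2 statements merged into one kernel-verified Lean document; each statement's English description precedes it below -/
import Mathlib

section
/- Let A be a product of rings of integers of finite extensions of ℚ₂. For α, β ∈ A, the element (1+4α)(1+4β)·(1+4(α+β))^{-1} is a square in A^×. In particular, the map 1+4β ↦ β̄ induces a group homomorphism from {u ∈ A^× : u ≡ 1 mod 4A}/(A^×)² to the reduction of A modulo its radical. -/
/-!
Writing `v = 1 + 4(α + β)`, one has `(1 + 4α)(1 + 4β) = v · (1 + 16αβ/v)`, and `v` is a unit.
In a ring that is Henselian at an ideal containing `2`, every `1 + 8w` is a square: it is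
`(1 + 2a)²` for the root `a ≡ 0` of `X² + X - 2w` given by Hensel's lemma. The ring of integers
of a finite extension of `ℚ₂` is a finite free `ℤ₂`-module, hence `2`-adically complete and
so Henselian; the product case is componentwise.
-/

open IsLocalRing Polynomial

namespace IsAdicComplete

variable {R : Type*} [CommRing R] {I : Ideal R}

theorem of_linearEquiv {M N : Type*} [AddCommGroup M] [Module R M] [AddCommGroup N] [Module R N]
    [IsAdicComplete I M] (e : M ≃ₗ[R] N) : IsAdicComplete I N := by
  have h : AdicCompletion.of I N =
      AdicCompletion.congr I e ∘ AdicCompletion.of I M ∘ e.symm := by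
    funext y
    simp [AdicCompletion.map_of]
  rw [← AdicCompletion.of_bijective_iff, h]
  exact (AdicCompletion.congr I e).bijective.comp
    ((AdicCompletion.of_bijective I M).comp e.symm.bijective)

instance pi {ι : Type*} [Finite ι] (M : ι → Type*) [∀ j, AddCommGroup (M j)]
    [∀ j, Module R (M j)] [∀ j, IsAdicComplete I (M j)] : IsAdicComplete I (∀ j, M j) := by
  classical
  have := Fintype.ofFinite ι
  have h : AdicCompletion.of I (∀ j, M j) =
      (AdicCompletion.piEquivOfFintype I M).symm ∘ Pi.map fun j => AdicCompletion.of I (M j) := by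
    funext x
    apply (AdicCompletion.piEquivOfFintype I M).injective
    funext j
    ext n
    simp [AdicCompletion.pi]
  rw [← AdicCompletion.of_bijective_iff, h]
  exact (AdicCompletion.piEquivOfFintype I M).symm.bijective.comp
    (Function.Bijective.piMap fun j => AdicCompletion.of_bijective I (M j))

end IsAdicComplete

namespace HenselianRing

variable {R : Type*} [CommRing R] {I : Ideal R} [HenselianRing R I]

theorem isUnit_one_add_two_mul (h2 : (2 : R) ∈ I) (x : R) : IsUnit (1 + 2 * x) := by
  simpa [add_comm] using Ideal.mem_jacobson_bot.mp (jac (I.mul_mem_right x h2)) 1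

theorem exists_sq_eq_one_add_eight_mul (h2 : (2 : R) ∈ I) (w : R) :
    ∃ x : R, x ^ 2 = 1 + 8 * w := by
  obtain ⟨a, ha, -⟩ := is_henselian (I := I) (X ^ 2 + X - C (2 * w))
    (by monicity!) 0 (by simpa using I.neg_mem (I.mul_mem_right w h2)) (by simp)
  have hroot : a ^ 2 + a - 2 * w = 0 := by simpa using ha
  exact ⟨1 + 2 * a, by linear_combination 4 * hroot⟩

theorem exists_unit_mul_sq (h2 : (2 : R) ∈ I) (α β : R) :
    ∃ u : Rˣ, (1 + 4 * α) * (1 + 4 * β) = (1 + 4 * (α + β)) * u ^ 2 := by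
  obtain ⟨v, hv⟩ := isUnit_one_add_two_mul h2 (2 * (α + β))
  obtain ⟨x, hx⟩ := exists_sq_eq_one_add_eight_mul h2 (2 * (α * β * ↑v⁻¹))
  have hx_unit : IsUnit x := by
    rw [← isUnit_pow_iff two_ne_zero, hx]
    convert isUnit_one_add_two_mul h2 (8 * (α * β * ↑v⁻¹)) using 2
    ring
  refine ⟨hx_unit.unit, ?_⟩
  rw [IsUnit.unit_spec, hx]
  linear_combination (-(16 * α * β)) * v.mul_inv + (16 * α * β * ↑v⁻¹) * hv

end HenselianRing

section IntegralClosure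

variable (p : ℕ) [Fact p.Prime] (K : Type*) [Field K] [Algebra ℚ_[p] K]
  [FiniteDimensional ℚ_[p] K] [Algebra ℤ_[p] K] [IsScalarTower ℤ_[p] ℚ_[p] K]

theorem PadicInt.isAdicComplete_integralClosure :
    IsAdicComplete ((maximalIdeal ℤ_[p]).map (algebraMap ℤ_[p] (integralClosure ℤ_[p] K)))
      (integralClosure ℤ_[p] K) := by
  have : Module.IsTorsionFree ℤ_[p] K := .trans_faithfulSMul ℤ_[p] ℚ_[p] K
  have := IsIntegralClosure.module_free ℤ_[p] ℚ_[p] K (integralClosure ℤ_[p] K)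
  have := IsIntegralClosure.finite ℤ_[p] ℚ_[p] K (integralClosure ℤ_[p] K)
  rw [IsAdicComplete.map_algebraMap_iff]
  exact .of_linearEquiv (Module.Free.chooseBasis ℤ_[p] _).equivFun.symm

theorem PadicInt.natCast_mem_map_maximalIdeal {S : Type*} [CommRing S] [Algebra ℤ_[p] S] :
    (p : S) ∈ (maximalIdeal ℤ_[p]).map (algebraMap ℤ_[p] S) := by
  rw [← map_natCast (algebraMap ℤ_[p] S)]
  refine Ideal.mem_map_of_mem _ ?_
  rw [PadicInt.maximalIdeal_eq_span_p]
  exact Ideal.mem_span_singleton_self _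

end IntegralClosure

theorem exists_unit_mul_sq_integralClosure (K : Type*) [Field K] [Algebra ℚ_[2] K]
    [FiniteDimensional ℚ_[2] K] [Algebra ℤ_[2] K] [IsScalarTower ℤ_[2] ℚ_[2] K]
    (α β : integralClosure ℤ_[2] K) :
    ∃ u : (integralClosure ℤ_[2] K)ˣ,
      (1 + 4 * α) * (1 + 4 * β) = (1 + 4 * (α + β)) * u ^ 2 :=
  have := PadicInt.isAdicComplete_integralClosure 2 K
  HenselianRing.exists_unit_mul_sq (by exact_mod_cast PadicInt.natCast_mem_map_maximalIdeal 2) α β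

/-- Let `A = 𝒪₁ × ⋯ × 𝒪_r` be a product of rings of integers of finite extensions of
`ℚ₂`. For `α, β ∈ A`, the element `(1+4α)(1+4β)(1+4(α+β))⁻¹` is a square in `A^×`:
there is a unit `u` with `(1+4α)(1+4β) = (1+4(α+β))·u²`. In particular `1+4β ↦ β̄`
induces a homomorphism `{u ≡ 1 mod 4}/(A^×)² → A/rad(A)`. -/
theorem stmt4 (r : ℕ) (K : Fin r → Type) [∀ i, Field (K i)]
    [∀ i, Algebra ℚ_[2] (K i)] [∀ i, FiniteDimensional ℚ_[2] (K i)]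
    [∀ i, Algebra ℤ_[2] (K i)] [∀ i, IsScalarTower ℤ_[2] ℚ_[2] (K i)]
    (α β : ∀ i, integralClosure ℤ_[2] (K i)) :
    ∃ u : (∀ i, integralClosure ℤ_[2] (K i))ˣ,
      (1 + 4 * α) * (1 + 4 * β) =
        (1 + 4 * (α + β)) * (u : ∀ i, integralClosure ℤ_[2] (K i)) ^ 2 := by
  choose u hu using fun i => exists_unit_mul_sq_integralClosure (K i) (α i) (β i)
  exact ⟨MulEquiv.piUnits.symm u, funext fun i => by simpa using hu i⟩
end

section
/- If a is a squarefree integer with a ≡ 1 or 2 (mod 4) and x⁴ + a is irreducible over ℚ, then the ring of integers of ℚ(⁴√−a) equals ℤ[⁴√−a]. -/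
private lemma sq8' (x : ℤ) (h : x % 2 = 1) : ∃ p, x ^ 2 = 8 * p + 1 := by
  obtain ⟨k, hk⟩ : ∃ k, x = 2 * k + 1 := ⟨x / 2, by omega⟩
  obtain ⟨t, ht⟩ := Int.even_mul_succ_self k
  have h2 : x ^ 2 = 4 * (k * (k + 1)) + 1 := by rw [hk]; ring
  rw [ht] at h2
  exact ⟨t, by omega⟩

/-- both odd: (x²+ay²)² = 32g+4 -/
private lemma repOdd (t x y : ℤ) (hx : x % 2 = 1) (hy : y % 2 = 1) :
    ∃ g, (x^2 + (4*t+1)*y^2)^2 = 32 * g + 4 := by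
  obtain ⟨p, hp⟩ := sq8' x hx
  obtain ⟨q, hq⟩ := sq8' y hy
  set m : ℤ := 4*p + 4*((4*t+1)*q) + 2*t + 1 with hmdef
  have e2 : x^2 + (4*t+1)*y^2 = 2 * m := by rw [hp, hq, hmdef]; ring
  have hmodd : m % 2 = 1 := by
    have : ∃ Y, m = 4*p + 4*Y + 2*t + 1 := ⟨(4*t+1)*q, rfl⟩
    obtain ⟨Y, hY⟩ := this
    omega
  obtain ⟨r, hr⟩ := sq8' m hmodd
  exact ⟨r, by rw [e2]; linear_combination 4 * hr⟩

/-- mixed parity: (x²+ay²)² = 8g+1 -/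
private lemma repMixed (t x y : ℤ) (hxy : x % 2 ≠ y % 2) :
    ∃ g, (x^2 + (4*t+1)*y^2)^2 = 8 * g + 1 := by
  have hodd : (x^2 + (4*t+1)*y^2) % 2 = 1 := by
    rcases Int.emod_two_eq x with hx | hx
    · have hy : y % 2 = 1 := by omega
      obtain ⟨l, hl⟩ : ∃ l, x = 2 * l := ⟨x/2, by omega⟩
      obtain ⟨q, hq⟩ := sq8' y hy
      have : ∃ A B, x^2 + (4*t+1)*y^2 = 4*A + 8*B + 1 :=
        ⟨l^2 + t, 4*t*q + q, by rw [hl, hq]; ring⟩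
      obtain ⟨A, B, hAB⟩ := this
      omega
    · have hy : y % 2 = 0 := by omega
      obtain ⟨p, hp⟩ := sq8' x hx
      obtain ⟨l, hl⟩ : ∃ l, y = 2 * l := ⟨y/2, by omega⟩
      have : ∃ A B, x^2 + (4*t+1)*y^2 = 8*A + 4*B + 1 := by
        refine ⟨p, (4*t+1)*l^2, ?_⟩
        rw [hp, hl]; ring
      obtain ⟨A, B, hAB⟩ := this
      omega
  obtain ⟨p, hp⟩ := sq8' _ hodd
  exact ⟨p, hp⟩

/-- both even: (x²+ay²)² = 16g -/
private lemma repEven (a x y : ℤ) (hx : x % 2 = 0) (hy : y % 2 = 0) :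
    ∃ g, (x^2 + a*y^2)^2 = 16 * g := by
  obtain ⟨k, hk⟩ : ∃ k, x = 2 * k := ⟨x/2, by omega⟩
  obtain ⟨l, hl⟩ : ∃ l, y = 2 * l := ⟨y/2, by omega⟩
  exact ⟨(k^2 + a*l^2)^2, by rw [hk, hl]; ring⟩

private lemma core (a u v w z : ℤ) (ha : a % 4 = 1)
    (h : (16:ℤ) ∣ ((u^2+a*w^2)^2 + a*(v^2+a*z^2)^2 + 4*a*(u*z-v*w)*(u*v+a*w*z))) :
    (u % 2 = 0 ∧ v % 2 = 0 ∧ w % 2 = 0 ∧ z % 2 = 0) ∨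
    (u % 2 = 0 ∧ v % 2 = 1 ∧ w % 2 = 0 ∧ z % 2 = 1) := by
  obtain ⟨t, rfl⟩ : ∃ t, a = 4 * t + 1 := ⟨a / 4, by omega⟩
  set a : ℤ := 4 * t + 1 with hadef
  obtain ⟨d, hd⟩ := h
  -- third term is always 4 * E
  obtain ⟨E, hE⟩ : ∃ E, 4*a*(u*z-v*w)*(u*v+a*w*z) = 4 * E := ⟨a*(u*z-v*w)*(u*v+a*w*z), by ring⟩
  rw [hE] at hd
  by_cases huw : u % 2 = w % 2
  · by_cases hvz : v % 2 = z % 2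
    · rcases Int.emod_two_eq u with hu | hu
      · -- u, w even
        rcases Int.emod_two_eq v with hv | hv
        · exact Or.inl ⟨hu, hv, by omega, by omega⟩
        · exact Or.inr ⟨hu, hv, by omega, by omega⟩
      · -- u, w odd : contradiction mod 16
        exfalso
        have hw : w % 2 = 1 := by omega
        obtain ⟨g1, hg1⟩ := repOdd t u w hu hw
        rcases Int.emod_two_eq v with hv | hv
        · -- v, z even
          have hz : z % 2 = 0 := by omega
          obtain ⟨p, hp⟩ : ∃ p, v = 2 * p := ⟨v/2, by omega⟩
          obtain ⟨q, hq⟩ : ∃ q, z = 2 * q := ⟨z/2, by omega⟩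
          obtain ⟨g2, hg2⟩ : ∃ g2, a*(v^2+a*z^2)^2 = 16 * g2 :=
            ⟨a*(p^2+a*q^2)^2, by rw [hp, hq]; ring⟩
          obtain ⟨g3, hg3⟩ : ∃ g3, E = 4 * g3 := by
            refine ⟨a*(u*q - p*w)*(u*p + a*w*q), ?_⟩
            have : 4 * E = 4 * (4 * (a*(u*q - p*w)*(u*p + a*w*q))) := by
              rw [← hE, hp, hq]; ring
            omega
          rw [hg1, hg2, hg3] at hd
          omega
        · -- v, z odd
          have hz : z % 2 = 1 := by omega
          obtain ⟨g2', hg2'⟩ := repOdd t v z hv hz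
          obtain ⟨g2, hg2⟩ : ∃ g2, a*(v^2+a*z^2)^2 = 32 * g2 + 4 * a :=
            ⟨a * g2', by rw [hg2']; ring⟩
          obtain ⟨l, hl⟩ : ∃ l, u*z - v*w = 2 * l := by
            obtain ⟨k1,hk1⟩ : ∃ k, u = 2*k+1 := ⟨u/2, by omega⟩
            obtain ⟨k2,hk2⟩ : ∃ k, v = 2*k+1 := ⟨v/2, by omega⟩
            obtain ⟨k3,hk3⟩ : ∃ k, w = 2*k+1 := ⟨w/2, by omega⟩
            obtain ⟨k4,hk4⟩ : ∃ k, z = 2*k+1 := ⟨z/2, by omega⟩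
            exact ⟨2*k1*k4+k1+k4-2*k2*k3-k2-k3, by rw [hk1,hk2,hk3,hk4]; ring⟩
          obtain ⟨n, hn⟩ : ∃ n, u*v + a*w*z = 2 * n := by
            obtain ⟨k1,hk1⟩ : ∃ k, u = 2*k+1 := ⟨u/2, by omega⟩
            obtain ⟨k2,hk2⟩ : ∃ k, v = 2*k+1 := ⟨v/2, by omega⟩
            obtain ⟨k3,hk3⟩ : ∃ k, w = 2*k+1 := ⟨w/2, by omega⟩
            obtain ⟨k4,hk4⟩ : ∃ k, z = 2*k+1 := ⟨z/2, by omega⟩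
            refine ⟨2*k1*k2+k1+k2 + 8*t*k3*k4+4*t*k3+4*t*k4+2*t + 2*k3*k4+k3+k4+1, ?_⟩
            rw [hk1,hk2,hk3,hk4, hadef]; ring
          obtain ⟨g3, hg3⟩ : ∃ g3, E = 4 * g3 := by
            refine ⟨a*l*n, ?_⟩
            have : 4 * E = 4 * (4 * (a*l*n)) := by rw [← hE, hl, hn]; ring
            omega
          rw [hg1, hg2, hg3, hadef] at hd
          omega
    · -- v, z mixed : contradiction mod 4 (a*S2² odd contribution)
      exfalso
      obtain ⟨g2', hg2'⟩ := repMixed t v z hvz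
      obtain ⟨g2, hg2⟩ : ∃ g2, a*(v^2+a*z^2)^2 = 8 * g2 + a := ⟨a*g2', by rw [hg2']; ring⟩
      rcases Int.emod_two_eq u with hu | hu
      · obtain ⟨g1, hg1⟩ := repEven a u w hu (by omega)
        rw [hg1, hg2, hadef] at hd
        omega
      · obtain ⟨g1, hg1⟩ := repOdd t u w hu (by omega)
        rw [hg1, hg2, hadef] at hd
        omega
  · -- u, w mixed : contradiction mod 4 (S1² odd)
    exfalso
    obtain ⟨g1, hg1⟩ := repMixed t u w huw
    by_cases hvz : v % 2 = z % 2
    · rcases Int.emod_two_eq v with hv | hv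
      · obtain ⟨g2', hg2'⟩ := repEven a v z hv (by omega)
        obtain ⟨g2, hg2⟩ : ∃ g2, a*(v^2+a*z^2)^2 = 16 * g2 := ⟨a*g2', by rw [hg2']; ring⟩
        rw [hg1, hg2] at hd
        omega
      · obtain ⟨g2', hg2'⟩ := repOdd t v z hv (by omega)
        obtain ⟨g2, hg2⟩ : ∃ g2, a*(v^2+a*z^2)^2 = 32 * g2 + 4 * a :=
          ⟨a*g2', by rw [hg2']; ring⟩
        rw [hg1, hg2, hadef] at hd
        omega
    · obtain ⟨g2', hg2'⟩ := repMixed t v z hvz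
      obtain ⟨g2, hg2⟩ : ∃ g2, a*(v^2+a*z^2)^2 = 8 * g2 + a := ⟨a*g2', by rw [hg2']; ring⟩
      rw [hg1, hg2, hadef] at hd
      omega

private lemma coreBoth (a u v w z : ℤ) (ha : a % 4 = 1)
    (h1 : (16:ℤ) ∣ ((u^2+a*w^2)^2 + a*(v^2+a*z^2)^2 + 4*a*(u*z-v*w)*(u*v+a*w*z)))
    (h2 : (16:ℤ) ∣ (((-(a*z))^2+a*v^2)^2 + a*(u^2+a*w^2)^2
      + 4*a*((-(a*z))*w-u*v)*((-(a*z))*u+a*v*w))) :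
    2 ∣ u ∧ 2 ∣ v ∧ 2 ∣ w ∧ 2 ∣ z := by
  rcases core a u v w z ha h1 with ⟨e1,e2,e3,e4⟩ | ⟨e1,e2,e3,e4⟩
  · exact ⟨by omega, by omega, by omega, by omega⟩
  · exfalso
    have haz : (-(a*z)) % 2 = 1 := by
      obtain ⟨k, hk⟩ : ∃ k, a = 4*k+1 := ⟨a/4, by omega⟩
      obtain ⟨l, hl⟩ : ∃ l, z = 2*l+1 := ⟨z/2, by omega⟩
      have e : -(a*z) = 2*(-(4*k*l+2*k+l)-1)+1 := by rw [hk, hl]; ring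
      omega
    rcases core a (-(a*z)) u v w ha h2 with ⟨f1,_⟩ | ⟨f1,_⟩ <;> omega

open Matrix in
private lemma det_fin_four {R : Type*} [CommRing R] (A : Matrix (Fin 4) (Fin 4) R) :
    A.det = A 0 0*A 1 1*A 2 2*A 3 3
      - A 0 0*A 1 1*A 2 3*A 3 2
      - A 0 0*A 1 2*A 2 1*A 3 3
      + A 0 0*A 1 2*A 2 3*A 3 1
      + A 0 0*A 1 3*A 2 1*A 3 2
      - A 0 0*A 1 3*A 2 2*A 3 1
      - A 0 1*A 1 0*A 2 2*A 3 3
      + A 0 1*A 1 0*A 2 3*A 3 2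
      + A 0 1*A 1 2*A 2 0*A 3 3
      - A 0 1*A 1 2*A 2 3*A 3 0
      - A 0 1*A 1 3*A 2 0*A 3 2
      + A 0 1*A 1 3*A 2 2*A 3 0
      + A 0 2*A 1 0*A 2 1*A 3 3
      - A 0 2*A 1 0*A 2 3*A 3 1
      - A 0 2*A 1 1*A 2 0*A 3 3
      + A 0 2*A 1 1*A 2 3*A 3 0
      + A 0 2*A 1 3*A 2 0*A 3 1
      - A 0 2*A 1 3*A 2 1*A 3 0
      - A 0 3*A 1 0*A 2 1*A 3 2
      + A 0 3*A 1 0*A 2 2*A 3 1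
      + A 0 3*A 1 1*A 2 0*A 3 2
      - A 0 3*A 1 1*A 2 2*A 3 0
      - A 0 3*A 1 2*A 2 0*A 3 1
      + A 0 3*A 1 2*A 2 1*A 3 0 := by
  rw [det_succ_row_zero]
  simp only [Fin.sum_univ_succ, Fin.sum_univ_zero, det_fin_three, submatrix_apply,
    Fin.succ_zero_eq_one, Fin.succ_one_eq_two, Fin.zero_succAbove, Fin.succ_succAbove_zero,
    Fin.succ_succAbove_one, Fin.val_zero, Fin.val_succ, Fin.val_eq_zero]
  have e1 : (Fin.succ 2 : Fin 4) = 3 := rfl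
  have e2 : Fin.succAbove (2:Fin 4) 2 = 3 := rfl
  have e3 : Fin.succAbove (3:Fin 4) 2 = 2 := rfl
  have e4 : Fin.succAbove (1:Fin 4) 2 = 3 := rfl
  simp only [e1, e2, e3, e4]
  ring

open Polynomial

/-- (Funakura) If `a` is a squarefree integer with `a ≡ 1` or `2 (mod 4)`, and
`x⁴ + a` is irreducible over `ℚ`, then the ring of integers of `ℚ(⁴√−a)` is
`ℤ[⁴√−a]`: an element is integral over `ℤ` iff it lies in `ℤ[θ]`, where `θ⁴ = −a`. -/
theorem stmt14 (a : ℤ) (hsf : Squarefree a) (hmod : a % 4 = 1 ∨ a % 4 = 2)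
    (K : Type*) [Field K] [NumberField K] (θ : K) (hθ : θ ^ 4 + (a : K) = 0)
    (hirr : Irreducible (X ^ 4 + C (a : ℚ)))
    (hgen : Algebra.adjoin ℚ {θ} = ⊤) :
    ∀ x : K, IsIntegral ℤ x ↔ x ∈ Algebra.adjoin ℤ {θ} := by
  have ha0 : a ≠ 0 := by rcases hmod with h | h <;> omega
  -- the minimal polynomial of θ over ℚ
  have hmonicQ : (X ^ 4 + C (a:ℚ)).Monic := monic_X_pow_add_C _ (by norm_num)
  have hrootQ : (aeval θ) (X ^ 4 + C (a:ℚ)) = 0 := by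
    simp only [map_add, map_pow, aeval_X, aeval_C]
    rw [show (algebraMap ℚ K) (a:ℚ) = (a:K) by push_cast; simp]
    exact hθ
  have hmQ : minpoly ℚ θ = X ^ 4 + C (a:ℚ) :=
    (minpoly.eq_of_irreducible_of_monic hirr hrootQ hmonicQ).symm
  have hQint : IsIntegral ℚ θ := ⟨X ^ 4 + C (a:ℚ), hmonicQ, hrootQ⟩
  have hmonicZ : (X ^ 4 + C a : ℤ[X]).Monic := monic_X_pow_add_C _ (by norm_num)
  have hrootZ : (aeval θ) (X ^ 4 + C a : ℤ[X]) = 0 := by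
    simp only [map_add, map_pow, aeval_X, aeval_C, algebraMap_int_eq, eq_intCast, map_intCast]
    exact hθ
  have hZint : IsIntegral ℤ θ := ⟨X ^ 4 + C a, hmonicZ, hrootZ⟩
  have hmZ : minpoly ℤ θ = X ^ 4 + C a := by
    apply Polynomial.map_injective (algebraMap ℤ ℚ) (fun x y h => by exact_mod_cast h)
    rw [← minpoly.isIntegrallyClosed_eq_field_fractions' ℚ hZint, hmQ]
    simp [Polynomial.map_add, Polynomial.map_pow, Polynomial.map_X, Polynomial.map_C]
  -- power basis
  set B : PowerBasis ℚ K :=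
    (Algebra.adjoin.powerBasis hQint).map
      ((Subalgebra.equivOfEq _ _ hgen).trans Subalgebra.topEquiv) with hBdef
  have hBgen : B.gen = θ := rfl
  have hBdim : B.dim = 4 := by
    show (minpoly ℚ θ).natDegree = 4
    rw [hmQ]
    compute_degree!
  set b : Module.Basis (Fin 4) ℚ K := B.basis.reindex (finCongr hBdim) with hbdef
  have hb : ∀ i : Fin 4, b i = θ ^ (i:ℕ) := by
    intro i
    rw [hbdef, Module.Basis.reindex_apply, B.basis_eq_pow, hBgen]
    simp
  have hθ4 : θ ^ 4 = -algebraMap ℚ K (a:ℚ) := by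
    rw [show (algebraMap ℚ K) (a:ℚ) = (a:K) by simp]
    exact eq_neg_of_add_eq_zero_left hθ
  have hv2 : ((2:Fin 4):ℕ) = 2 := rfl
  have hv3 : ((3:Fin 4):ℕ) = 3 := rfl
  -- the norm form
  have normForm : ∀ q0 q1 q2 q3 : ℚ,
      Algebra.norm ℚ (algebraMap ℚ K q0 + algebraMap ℚ K q1 * θ
        + algebraMap ℚ K q2 * θ^2 + algebraMap ℚ K q3 * θ^3) =
      (q0^2+(a:ℚ)*q2^2)^2 + (a:ℚ)*(q1^2+(a:ℚ)*q3^2)^2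
        + 4*(a:ℚ)*(q0*q3-q1*q2)*(q0*q1+(a:ℚ)*q2*q3) := by
    intro q0 q1 q2 q3
    set s : K := algebraMap ℚ K q0 + algebraMap ℚ K q1 * θ
        + algebraMap ℚ K q2 * θ^2 + algebraMap ℚ K q3 * θ^3 with hsdef
    have hrepr : ∀ (y : K) (c : Fin 4 → ℚ), y = ∑ k, c k • b k → ∀ i, b.repr y i = c i := by
      rintro y c rfl i
      rw [Module.Basis.repr_sum_self]
    have r0 : ∀ i, b.repr (s * b 0) i = ![q0, q1, q2, q3] i := by
      apply hrepr
      simp only [Fin.sum_univ_four, hb, Algebra.smul_def, Matrix.cons_val_zero,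
        Matrix.cons_val_one, Matrix.head_cons, Matrix.cons_val_two, Matrix.tail_cons,
        Matrix.cons_val_three, Fin.val_zero, Fin.val_one, hv2, hv3, map_mul, map_neg, hsdef]
      ring
    have r1 : ∀ i, b.repr (s * b 1) i = ![-(a:ℚ)*q3, q0, q1, q2] i := by
      apply hrepr
      simp only [Fin.sum_univ_four, hb, Algebra.smul_def, Matrix.cons_val_zero,
        Matrix.cons_val_one, Matrix.head_cons, Matrix.cons_val_two, Matrix.tail_cons,
        Matrix.cons_val_three, Fin.val_zero, Fin.val_one, hv2, hv3, map_mul, map_neg, hsdef]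
      linear_combination (algebraMap ℚ K q3) * hθ4
    have r2 : ∀ i, b.repr (s * b 2) i = ![-(a:ℚ)*q2, -(a:ℚ)*q3, q0, q1] i := by
      apply hrepr
      simp only [Fin.sum_univ_four, hb, Algebra.smul_def, Matrix.cons_val_zero,
        Matrix.cons_val_one, Matrix.head_cons, Matrix.cons_val_two, Matrix.tail_cons,
        Matrix.cons_val_three, Fin.val_zero, Fin.val_one, hv2, hv3, map_mul, map_neg, hsdef]
      linear_combination (algebraMap ℚ K q2 + algebraMap ℚ K q3 * θ) * hθ4
    have r3 : ∀ i, b.repr (s * b 3) i = ![-(a:ℚ)*q1, -(a:ℚ)*q2, -(a:ℚ)*q3, q0] i := by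
      apply hrepr
      simp only [Fin.sum_univ_four, hb, Algebra.smul_def, Matrix.cons_val_zero,
        Matrix.cons_val_one, Matrix.head_cons, Matrix.cons_val_two, Matrix.tail_cons,
        Matrix.cons_val_three, Fin.val_zero, Fin.val_one, hv2, hv3, map_mul, map_neg, hsdef]
      linear_combination (algebraMap ℚ K q1 + algebraMap ℚ K q2 * θ
        + algebraMap ℚ K q3 * θ^2) * hθ4
    rw [Algebra.norm_eq_matrix_det b, det_fin_four]
    simp only [Algebra.leftMulMatrix_eq_repr_mul, r0, r1, r2, r3, Matrix.cons_val_zero,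
      Matrix.cons_val_one, Matrix.head_cons, Matrix.cons_val_two, Matrix.tail_cons,
      Matrix.cons_val_three]
    ring
  have hfr : Module.finrank ℚ K = 4 := by rw [B.finrank, hBdim]
  -- norm of an integral element is an integer
  have normInt : ∀ y : K, IsIntegral ℤ y → ∃ r : ℤ, (r : ℚ) = Algebra.norm ℚ y := by
    intro y hy
    obtain ⟨r, hr⟩ := IsIntegrallyClosed.isIntegral_iff.mp (Algebra.isIntegral_norm ℚ hy)
    exact ⟨r, by exact_mod_cast hr⟩
  -- norm of 2 • y
  have norm2 : ∀ y : K, Algebra.norm ℚ ((2:ℤ) • y) = 16 * Algebra.norm ℚ y := by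
    intro y
    have e : (2:ℤ) • y = algebraMap ℚ K 2 * y := by
      rw [Algebra.smul_def]
      norm_num
    rw [e, map_mul, Algebra.norm_algebraMap, hfr]
    norm_num
  -- membership of explicit combinations
  have memComb : ∀ d0 d1 d2 d3 : ℤ,
      d0 • (1:K) + d1 • θ + d2 • θ^2 + d3 • θ^3 ∈ Algebra.adjoin ℤ {θ} := by
    intro d0 d1 d2 d3
    have hθm : θ ∈ Algebra.adjoin ℤ {θ} := Algebra.subset_adjoin rfl
    exact add_mem (add_mem (add_mem
      (Subalgebra.zsmul_mem _ (one_mem _) _)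
      (Subalgebra.zsmul_mem _ hθm _))
      (Subalgebra.zsmul_mem _ (pow_mem hθm 2) _))
      (Subalgebra.zsmul_mem _ (pow_mem hθm 3) _)
  -- the key 2-adic lemma for a ≡ 1 mod 4
  have lemL : a % 4 = 1 → ∀ y : K, IsIntegral ℤ y → (2:ℤ) • y ∈ Algebra.adjoin ℤ {θ} →
      y ∈ Algebra.adjoin ℤ {θ} := by
    intro ha1 y hy h2y
    rw [Algebra.adjoin_singleton_eq_range_aeval] at h2y
    obtain ⟨Q, hQ⟩ := h2y
    set R : ℤ[X] := Q %ₘ (X ^ 4 + C a) with hRdef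
    have haevalR : (aeval θ) R = (2:ℤ) • y := by
      have hdiv := Polynomial.modByMonic_add_div Q (X ^ 4 + C a)
      have : (aeval θ) (Q %ₘ (X ^ 4 + C a) + (X ^ 4 + C a) * (Q /ₘ (X ^ 4 + C a))) =
          (aeval θ) Q := by rw [hdiv]
      rw [map_add, map_mul, hrootZ, zero_mul, add_zero] at this
      rw [hRdef, this]
      exact hQ
    have hdegR : R.natDegree < 4 := by
      by_cases hR0 : R = 0
      · rw [hR0]; simp
      · have h1 := Polynomial.degree_modByMonic_lt Q hmonicZ
        have h2 : (X ^ 4 + C a : ℤ[X]).degree = 4 := by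
          rw [Polynomial.degree_eq_natDegree hmonicZ.ne_zero, Polynomial.natDegree_X_pow_add_C]
          rfl
        rw [h2] at h1
        exact (Polynomial.natDegree_lt_iff_degree_lt hR0).mpr h1
    set c0 := R.coeff 0
    set c1 := R.coeff 1
    set c2 := R.coeff 2
    set c3 := R.coeff 3
    have hexp : (2:ℤ) • y = algebraMap ℚ K (c0:ℚ) + algebraMap ℚ K (c1:ℚ) * θ
        + algebraMap ℚ K (c2:ℚ) * θ^2 + algebraMap ℚ K (c3:ℚ) * θ^3 := by
      rw [← haevalR, Polynomial.aeval_eq_sum_range' hdegR]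
      simp only [Finset.sum_range_succ, Finset.sum_range_zero, zero_add, pow_zero, pow_one]
      have hz : ∀ c : ℤ, ∀ k : K, c • k = algebraMap ℚ K (c:ℚ) * k := by
        intro c k
        rw [zsmul_eq_mul]
        norm_num
      rw [hz, hz, hz, hz]
      ring
    -- first norm condition
    obtain ⟨r1, hr1⟩ := normInt y hy
    have hN1 : ((c0:ℚ)^2+(a:ℚ)*(c2:ℚ)^2)^2 + (a:ℚ)*((c1:ℚ)^2+(a:ℚ)*(c3:ℚ)^2)^2
        + 4*(a:ℚ)*((c0:ℚ)*(c3:ℚ)-(c1:ℚ)*(c2:ℚ))*((c0:ℚ)*(c1:ℚ)+(a:ℚ)*(c2:ℚ)*(c3:ℚ))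
        = 16 * (r1:ℚ) := by
      rw [← normForm c0 c1 c2 c3, ← hexp, norm2, hr1]
    have int1 : (16:ℤ) ∣ ((c0^2+a*c2^2)^2 + a*(c1^2+a*c3^2)^2
        + 4*a*(c0*c3-c1*c2)*(c0*c1+a*c2*c3)) := by
      refine ⟨r1, ?_⟩
      exact_mod_cast hN1
    -- second norm condition (multiply by θ)
    have hy2 : IsIntegral ℤ (θ * y) := hZint.mul hy
    obtain ⟨r2, hr2⟩ := normInt (θ * y) hy2
    have hexp2 : (2:ℤ) • (θ * y) = algebraMap ℚ K ((-(a*c3) : ℤ):ℚ)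
        + algebraMap ℚ K (c0:ℚ) * θ + algebraMap ℚ K (c1:ℚ) * θ^2
        + algebraMap ℚ K (c2:ℚ) * θ^3 := by
      have e : (2:ℤ) • (θ * y) = θ * ((2:ℤ) • y) := (mul_smul_comm (2:ℤ) θ y).symm
      rw [e, hexp]
      simp only [Int.cast_neg, Int.cast_mul, map_neg, map_mul]
      linear_combination (algebraMap ℚ K (c3:ℚ)) * hθ4
    have hN2 : (((-(a*c3):ℤ):ℚ)^2+(a:ℚ)*(c1:ℚ)^2)^2 + (a:ℚ)*((c0:ℚ)^2+(a:ℚ)*(c2:ℚ)^2)^2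
        + 4*(a:ℚ)*(((-(a*c3):ℤ):ℚ)*(c2:ℚ)-(c0:ℚ)*(c1:ℚ))*(((-(a*c3):ℤ):ℚ)*(c0:ℚ)+(a:ℚ)*(c1:ℚ)*(c2:ℚ))
        = 16 * (r2:ℚ) := by
      rw [← normForm ((-(a*c3):ℤ):ℚ) c0 c1 c2, ← hexp2, norm2, hr2]
    have int2 : (16:ℤ) ∣ (((-(a*c3))^2+a*c1^2)^2 + a*(c0^2+a*c2^2)^2
        + 4*a*((-(a*c3))*c2-c0*c1)*((-(a*c3))*c0+a*c1*c2)) := by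
      refine ⟨r2, ?_⟩
      exact_mod_cast hN2
    obtain ⟨hd0, hd1, hd2, hd3⟩ := coreBoth a c0 c1 c2 c3 ha1 int1 int2
    obtain ⟨d0, he0⟩ := hd0
    obtain ⟨d1, he1⟩ := hd1
    obtain ⟨d2, he2⟩ := hd2
    obtain ⟨d3, he3⟩ := hd3
    have hyeq : y = d0 • (1:K) + d1 • θ + d2 • θ^2 + d3 • θ^3 := by
      have h2 : (2:ℤ) • y = (2:ℤ) • (d0 • (1:K) + d1 • θ + d2 • θ^2 + d3 • θ^3) := by
        rw [hexp, he0, he1, he2, he3]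
        push_cast
        simp only [smul_add, smul_smul]
        have hz : ∀ c : ℤ, ∀ k : K, c • k = algebraMap ℚ K (c:ℚ) * k := by
          intro c k
          rw [zsmul_eq_mul]
          norm_num
        rw [hz, hz, hz, hz]
        push_cast
        ring
      exact smul_right_injective K (by norm_num : (2:ℤ) ≠ 0) h2
    rw [hyeq]
    exact memComb d0 d1 d2 d3
  -- Eisenstein step at primes dividing a
  have eis : ∀ p : ℤ, Prime p → p ∣ a → ∀ y : K, IsIntegral ℤ y →
      p • y ∈ Algebra.adjoin ℤ {θ} → y ∈ Algebra.adjoin ℤ {θ} := by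
    intro p hp hpa y hy hmem
    have hei : (minpoly ℤ B.gen).IsEisensteinAt (Ideal.span {p}) := by
      rw [hBgen, hmZ]
      constructor
      · intro hle
        rw [hmonicZ.leadingCoeff, Ideal.mem_span_singleton] at hle
        exact hp.not_unit (isUnit_of_dvd_one hle)
      · intro n hn
        rw [(by rw [Polynomial.natDegree_X_pow_add_C] : (X^4 + C a : ℤ[X]).natDegree = 4)] at hn
        rw [Polynomial.coeff_add, Polynomial.coeff_X_pow, Polynomial.coeff_C]
        interval_cases n <;> simp [Ideal.mem_span_singleton, hpa]
      · rw [Polynomial.coeff_add, Polynomial.coeff_X_pow, Polynomial.coeff_C]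
        simp only [if_pos rfl]
        rw [Ideal.span_singleton_pow, Ideal.mem_span_singleton]
        norm_num
        intro hsq
        exact hp.not_unit (hsf p (by rwa [pow_two] at hsq))
    have := mem_adjoin_of_smul_prime_smul_of_minpoly_isEisensteinAt (B := B) (p := p) hp
      (hBint := by rwa [hBgen]) (hzint := hy) (hz := by rwa [hBgen]) hei
    rwa [hBgen] at this
  -- single prime step
  have single : ∀ p : ℤ, Prime p → p ∣ 2 * a → ∀ y : K, IsIntegral ℤ y →
      p • y ∈ Algebra.adjoin ℤ {θ} → y ∈ Algebra.adjoin ℤ {θ} := by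
    intro p hp hp2a y hy hmem
    by_cases hpa : p ∣ a
    · exact eis p hp hpa y hy hmem
    · have hp2 : p ∣ 2 := (hp.dvd_mul.mp hp2a).resolve_right hpa
      have ha1 : a % 4 = 1 := by
        rcases hmod with h | h
        · exact h
        · exfalso
          apply hpa
          have h2a : (2:ℤ) ∣ a := by omega
          exact dvd_trans hp2 h2a
      have hpval : p = 2 ∨ p = -2 := by
        have h1 : p.natAbs ∣ 2 := by
          have := Int.natAbs_dvd_natAbs.mpr hp2
          simpa using this
        have h2 : p.natAbs.Prime := Int.prime_iff_natAbs_prime.mp hp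
        have h3 : p.natAbs = 2 := (Nat.prime_dvd_prime_iff_eq h2 (by norm_num)).mp h1
        rcases Int.natAbs_eq p with h | h <;> omega
      rcases hpval with rfl | rfl
      · exact lemL ha1 y hy hmem
      · apply lemL ha1 y hy
        have : (2:ℤ) • y = -((-2:ℤ) • y) := by
          simp [neg_smul]
        rw [this]
        exact neg_mem hmem
  -- strip all primes dividing 2a
  have strip : ∀ n : ℤ, (∀ p : ℤ, Prime p → p ∣ n → p ∣ 2 * a) → n ≠ 0 →
      ∀ y : K, IsIntegral ℤ y → n • y ∈ Algebra.adjoin ℤ {θ} → y ∈ Algebra.adjoin ℤ {θ} := by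
    intro n
    refine UniqueFactorizationMonoid.induction_on_prime n ?_ ?_ ?_
    · intro _ h
      exact absurd rfl h
    · intro u hu _ _ y hy hmem
      rcases Int.isUnit_iff.mp hu with rfl | rfl
      · simpa using hmem
      · have : y = -((-1:ℤ) • y) := by simp
        rw [this]
        exact neg_mem hmem
    · intro m p hm0 hp IH hcond hne y hy hmem
      rw [mul_smul] at hmem
      have hmy : IsIntegral ℤ (m • y) := by
        have : (m:K) * y = m • y := (zsmul_eq_mul y m).symm
        rw [← this]
        exact (isIntegral_algebraMap (x := m)).mul hy  -- might need fixing
      have h1 : m • y ∈ Algebra.adjoin ℤ {θ} :=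
        single p hp (hcond p hp (Dvd.intro m rfl)) (m • y) hmy hmem
      exact IH (fun q hq hqm => hcond q hq (hqm.mul_left p)) hm0 y hy h1
  -- discriminant
  intro x
  constructor
  · intro hx
    have hdisc : Algebra.discr ℚ B.basis = ((256 * a ^ 3 : ℤ) : ℚ) := by
      rw [Algebra.discr_powerBasis_eq_norm, hBgen, hmQ]
      have hder : derivative (X ^ 4 + C (a:ℚ)) = C 4 * X ^ 3 := by
        simp [derivative_X_pow]
        rw [← C_1, ← C_add]; norm_num
      rw [hder]
      have : (aeval θ) (C (4:ℚ) * X ^ 3) = algebraMap ℚ K 0 + algebraMap ℚ K 0 * θ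
          + algebraMap ℚ K 0 * θ^2 + algebraMap ℚ K 4 * θ^3 := by
        simp [aeval_C]
      rw [this, normForm 0 0 0 4, hfr]
      push_cast
      norm_num
      ring
    have hmem := Algebra.discr_mul_isIntegral_mem_adjoin ℚ (R := ℤ) (B := B)
      (by rwa [hBgen]) hx
    rw [hdisc, hBgen, Int.cast_smul_eq_zsmul] at hmem
    have hne : (256 * a ^ 3 : ℤ) ≠ 0 :=
      mul_ne_zero (by norm_num) (pow_ne_zero 3 ha0)
    have hcond : ∀ p : ℤ, Prime p → p ∣ 256 * a ^ 3 → p ∣ 2 * a := by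
      intro p hp hdvd
      have h256 : (256 : ℤ) = 2 ^ 8 := by norm_num
      rw [h256] at hdvd
      rcases hp.dvd_mul.mp hdvd with h | h
      · exact dvd_mul_of_dvd_left (hp.dvd_of_dvd_pow h) a
      · exact (hp.dvd_of_dvd_pow h).mul_left 2
    exact strip (256 * a ^ 3) hcond hne x hx hmem
  · intro hx
    have hle : Algebra.adjoin ℤ {θ} ≤ integralClosure ℤ K := by
      apply Algebra.adjoin_le
      intro t ht
      rw [Set.mem_singleton_iff] at ht
      rw [ht]
      exact hZint
    exact hle hx
end
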